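/- Define α(r) by S(r) = 1/(r² + 1/2 - (4r²+1)/(12(r²+α(r)))), i.e., α(r) = ((12r⁴+2r²-1)S(r) - 12r²)/(12 - (12r²+6)S(r)). Then lim_{r→∞} α(r) = 13/30. -/

import Mathlib

open Filter Topology

/-
Discrete Euler–Maclaurin by telescoping. With m = n + 1, Y = m² + r² and b_n = n² + n + r² + 1/2 we
have b_n = Y - m + 1/2, b_{n+1} = Y + m + 1/2 and b_n b_{n+1} = Y² + r² + 1/4 ≥ Y². The function
P(b) = b⁻¹ + (r² + 1/4)(b⁻³ - b⁻⁴)/3 + (r² + 1/4)(28r² + 43) b⁻⁵/60 is chosen so that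
2m/Y² - (P(b_n) - P(b_{n+1})) is a combination of three terms, each O(2m/(b_n b_{n+1} Y³)), hence
O(r⁻⁶ (b_n⁻¹ - b_{n+1}⁻¹)). Summing the telescoping series gives
S(r) = P(r² + 1/2) + O(r⁻⁸) = r⁻² - r⁻⁴/6 - r⁻⁶/30 + O(r⁻⁸), and in terms of
E = r⁶(S - r⁻² + r⁻⁴/6) → -1/30 and t = r⁻² → 0, α is a rational function of (E, t) continuous at
(-1/30, 0), with value (12·(-1/30) - 4/3)/(-4) = 13/30.
-/

noncomputable def S (r : ℝ) : ℝ :=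
  ∑' n : ℕ, (2 * ((n : ℝ) + 1)) / ((((n : ℝ) + 1) ^ 2 + r ^ 2) ^ 2)

noncomputable def α (r : ℝ) : ℝ :=
  ((12 * r ^ 4 + 2 * r ^ 2 - 1) * S r - 12 * r ^ 2) / (12 - (12 * r ^ 2 + 6) * S r)

lemma hasSum_sub_succ_of_antitone {g : ℕ → ℝ} (hg : Antitone g)
    (h0 : Tendsto g atTop (𝓝 0)) : HasSum (fun n => g n - g (n + 1)) (g 0) := by
  rw [hasSum_iff_tendsto_nat_of_nonneg (fun n => sub_nonneg.2 (hg n.le_succ))]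
  simp only [Finset.sum_range_sub']
  simpa using tendsto_const_nhds.sub h0

noncomputable def mathieuTerm (r : ℝ) (n : ℕ) : ℝ :=
  2 * ((n : ℝ) + 1) / (((n : ℝ) + 1) ^ 2 + r ^ 2) ^ 2

noncomputable def node (r : ℝ) (n : ℕ) : ℝ :=
  (n : ℝ) ^ 2 + n + r ^ 2 + 1 / 2

noncomputable def mathieuPrimitive (r b : ℝ) : ℝ :=
  b⁻¹ + (r ^ 2 + 1 / 4) / 3 * ((b ^ 3)⁻¹ - (b ^ 4)⁻¹)
    + (r ^ 2 + 1 / 4) * (28 * r ^ 2 + 43) / 60 * (b ^ 5)⁻¹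

lemma node_pos (r : ℝ) (n : ℕ) : 0 < node r n := by
  unfold node; positivity

lemma node_zero (r : ℝ) : node r 0 = r ^ 2 + 1 / 2 := by
  simp [node]

lemma monotone_node (r : ℝ) : Monotone (node r) :=
  monotone_nat_of_le_succ fun n => by unfold node; push_cast; nlinarith

lemma tendsto_node_atTop (r : ℝ) : Tendsto (node r) atTop atTop := by
  refine tendsto_atTop_mono (fun n => ?_) tendsto_natCast_atTop_atTop
  unfold node
  nlinarith [sq_nonneg (n : ℝ)]

lemma hasSum_inv_pow_node_sub (r : ℝ) {k : ℕ} (hk : k ≠ 0) :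
    HasSum (fun n => (node r n ^ k)⁻¹ - (node r (n + 1) ^ k)⁻¹) ((r ^ 2 + 1 / 2) ^ k)⁻¹ := by
  rw [← node_zero]
  refine hasSum_sub_succ_of_antitone (fun i j hij => ?_) ?_
  · have hi := node_pos r i
    gcongr
    exact monotone_node r hij
  · exact tendsto_inv_atTop_zero.comp ((tendsto_pow_atTop hk).comp (tendsto_node_atTop r))

lemma hasSum_mathieuPrimitive_node_sub (r : ℝ) :
    HasSum (fun n => mathieuPrimitive r (node r n) - mathieuPrimitive r (node r (n + 1)))
      (mathieuPrimitive r (r ^ 2 + 1 / 2)) := by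
  have h1 := hasSum_inv_pow_node_sub r one_ne_zero
  have h3 := hasSum_inv_pow_node_sub r (k := 3) (by norm_num)
  have h4 := hasSum_inv_pow_node_sub r (k := 4) (by norm_num)
  have h5 := hasSum_inv_pow_node_sub r (k := 5) (by norm_num)
  simp only [pow_one] at h1
  convert (h1.add ((h3.sub h4).mul_left ((r ^ 2 + 1 / 4) / 3))).add
    (h5.mul_left ((r ^ 2 + 1 / 4) * (28 * r ^ 2 + 43) / 60)) using 1
  · ext n; simp only [mathieuPrimitive]; ring
  · simp only [mathieuPrimitive]

lemma mathieuPrimitive_remainder_eq {m r Y a c : ℝ} (hY : r ^ 2 = Y - m ^ 2)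
    (ha : a = Y - m + 1 / 2) (hc : c = Y + m + 1 / 2) (ha0 : a ≠ 0) (hc0 : c ≠ 0) (hY0 : Y ≠ 0) :
    2 * m / Y ^ 2 - (mathieuPrimitive r a - mathieuPrimitive r c) =
      (r ^ 2 + 1 / 4) ^ 3 * (2 * m / ((a * c) ^ 3 * Y ^ 2))
      - (r ^ 2 + 1 / 4) / 3 * (8 * (r ^ 2 - 1 / 2) * (Y + 1 / 2) + 8 * r ^ 2 + 4
          + (28 * r ^ 2 + 43) * m ^ 2) * (2 * m / (a * c) ^ 4)
      - 4 * (r ^ 2 + 1 / 4) * (28 * r ^ 2 + 43) / 15 * (2 * m ^ 5 / (a * c) ^ 5) := by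
  unfold mathieuPrimitive
  rw [hY]
  field_simp
  subst ha hc
  ring

lemma abs_mathieuPrimitive_remainder_le {m r Y X : ℝ} (hm : 0 ≤ m) (hr : 1 ≤ r)
    (hY : Y = m ^ 2 + r ^ 2) (hX : Y ^ 2 ≤ X) :
    |(r ^ 2 + 1 / 4) ^ 3 * (2 * m / (X ^ 3 * Y ^ 2))
      - (r ^ 2 + 1 / 4) / 3 * (8 * (r ^ 2 - 1 / 2) * (Y + 1 / 2) + 8 * r ^ 2 + 4
          + (28 * r ^ 2 + 43) * m ^ 2) * (2 * m / X ^ 4)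
      - 4 * (r ^ 2 + 1 / 4) * (28 * r ^ 2 + 43) / 15 * (2 * m ^ 5 / X ^ 5)|
      ≤ 104 * (2 * m / (X * Y ^ 3)) := by
  have hr2 : 1 ≤ r ^ 2 := one_le_pow₀ hr
  have hrY : r ^ 2 ≤ Y := by rw [hY]; nlinarith
  have hmY : m ^ 2 ≤ Y := by rw [hY]; nlinarith
  have hY1 : 1 ≤ Y := hr2.trans hrY
  have hX0 : 0 < X := by nlinarith
  have hq : r ^ 2 + 1 / 4 ≤ 2 * Y := by linarith
  have hr2' : 0 ≤ r ^ 2 - 1 / 2 := by linarith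
  have hA : (r ^ 2 + 1 / 4) ^ 3 * (2 * m / (X ^ 3 * Y ^ 2)) ≤ 8 * (2 * m / (X * Y ^ 3)) :=
    calc (r ^ 2 + 1 / 4) ^ 3 * (2 * m / (X ^ 3 * Y ^ 2))
        = (r ^ 2 + 1 / 4) ^ 3 * (2 * m / (X ^ 2 * X * Y ^ 2)) := by ring
      _ ≤ (2 * Y) ^ 3 * (2 * m / ((Y ^ 2) ^ 2 * X * Y ^ 2)) := by gcongr
      _ = 8 * (2 * m / (X * Y ^ 3)) := by field_simp; ring
  have hB : (r ^ 2 + 1 / 4) / 3 * (8 * (r ^ 2 - 1 / 2) * (Y + 1 / 2) + 8 * r ^ 2 + 4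
          + (28 * r ^ 2 + 43) * m ^ 2) * (2 * m / X ^ 4) ≤ 66 * (2 * m / (X * Y ^ 3)) :=
    calc _ = (r ^ 2 + 1 / 4) / 3 * (8 * (r ^ 2 - 1 / 2) * (Y + 1 / 2) + 8 * r ^ 2 + 4
          + (28 * r ^ 2 + 43) * m ^ 2) * (2 * m / (X ^ 3 * X)) := by ring
      _ ≤ (2 * Y) / 3 * (8 * Y * (2 * Y) + 8 * Y * Y + 4 * Y * Y + (71 * Y) * Y)
          * (2 * m / ((Y ^ 2) ^ 3 * X)) := by gcongr <;> nlinarith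
      _ = 66 * (2 * m / (X * Y ^ 3)) := by field_simp; ring
  have hC : 4 * (r ^ 2 + 1 / 4) * (28 * r ^ 2 + 43) / 15 * (2 * m ^ 5 / X ^ 5)
      ≤ 38 * (2 * m / (X * Y ^ 3)) :=
    calc _ = 4 * (r ^ 2 + 1 / 4) * (28 * r ^ 2 + 43) / 15
          * (2 * m * (m ^ 2) ^ 2 / (X ^ 4 * X)) := by ring
      _ ≤ 4 * (2 * Y) * (71 * Y) / 15 * (2 * m * Y ^ 2 / ((Y ^ 2) ^ 4 * X)) := by
          gcongr; linarith
      _ = 568 / 15 * (2 * m / (X * Y ^ 3)) / Y := by field_simp; ring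
      _ ≤ 38 * (2 * m / (X * Y ^ 3)) := by
          rw [div_le_iff₀ (by linarith)]
          have : 0 ≤ 2 * m / (X * Y ^ 3) := by positivity
          nlinarith
  have hA0 : 0 ≤ (r ^ 2 + 1 / 4) ^ 3 * (2 * m / (X ^ 3 * Y ^ 2)) := by positivity
  have hB0 : 0 ≤ (r ^ 2 + 1 / 4) / 3 * (8 * (r ^ 2 - 1 / 2) * (Y + 1 / 2) + 8 * r ^ 2 + 4
          + (28 * r ^ 2 + 43) * m ^ 2) * (2 * m / X ^ 4) := by positivity
  have hC0 : 0 ≤ 4 * (r ^ 2 + 1 / 4) * (28 * r ^ 2 + 43) / 15 * (2 * m ^ 5 / X ^ 5) := by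
    positivity
  rw [abs_le]
  constructor <;> linarith

lemma abs_mathieuTerm_sub_le {r : ℝ} (hr : 1 ≤ r) (n : ℕ) :
    |mathieuTerm r n - (mathieuPrimitive r (node r n) - mathieuPrimitive r (node r (n + 1)))|
      ≤ 104 / r ^ 6 * ((node r n)⁻¹ - (node r (n + 1))⁻¹) := by
  set m : ℝ := (n : ℝ) + 1
  set Y := m ^ 2 + r ^ 2
  have hm : 0 ≤ m := by positivity
  have ha : node r n = Y - m + 1 / 2 := by simp only [node, Y, m]; ring
  have hc : node r (n + 1) = Y + m + 1 / 2 := by simp only [node, Y, m]; push_cast; ring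
  have hX : Y ^ 2 ≤ node r n * node r (n + 1) := by
    rw [ha, hc]; nlinarith
  have hrY : r ^ 6 ≤ Y ^ 3 := by
    rw [show r ^ 6 = (r ^ 2) ^ 3 by ring]; gcongr; simp only [Y]; nlinarith
  have hX0 := mul_pos (node_pos r n) (node_pos r (n + 1))
  calc _ = |2 * m / Y ^ 2
          - (mathieuPrimitive r (node r n) - mathieuPrimitive r (node r (n + 1)))| := rfl
    _ ≤ 104 * (2 * m / (node r n * node r (n + 1) * Y ^ 3)) := by
      rw [mathieuPrimitive_remainder_eq (by ring) ha hc (node_pos r n).ne' (node_pos r (n + 1)).ne'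
        (by positivity)]
      exact abs_mathieuPrimitive_remainder_le hm hr rfl hX
    _ ≤ 104 * (2 * m / (node r n * node r (n + 1) * r ^ 6)) := by gcongr
    _ = 104 / r ^ 6 * ((node r n)⁻¹ - (node r (n + 1))⁻¹) := by
      rw [inv_sub_inv (node_pos r n).ne' (node_pos r (n + 1)).ne', ha, hc]
      field_simp
      ring

lemma abs_S_sub_mathieuPrimitive_le {r : ℝ} (hr : 1 ≤ r) :
    |S r - mathieuPrimitive r (r ^ 2 + 1 / 2)| ≤ 104 / r ^ 8 := by
  set R := fun n => mathieuTerm r n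
    - (mathieuPrimitive r (node r n) - mathieuPrimitive r (node r (n + 1)))
  have hbound := (hasSum_inv_pow_node_sub r one_ne_zero).mul_left (104 / r ^ 6)
  simp only [pow_one] at hbound
  have hR : ∀ n, ‖R n‖ ≤ 104 / r ^ 6 * ((node r n)⁻¹ - (node r (n + 1))⁻¹) :=
    abs_mathieuTerm_sub_le hr
  have hS : HasSum (mathieuTerm r) (mathieuPrimitive r (r ^ 2 + 1 / 2) + ∑' n, R n) := by
    convert (hasSum_mathieuPrimitive_node_sub r).add (hbound.summable.of_norm_bounded hR).hasSum
      using 1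
    ext n
    simp only [R]
    ring
  rw [show S r = ∑' n, mathieuTerm r n from rfl, hS.tsum_eq, add_sub_cancel_left]
  calc |∑' n, R n| ≤ 104 / r ^ 6 * (r ^ 2 + 1 / 2)⁻¹ := tsum_of_norm_bounded hbound hR
    _ ≤ 104 / r ^ 6 * (r ^ 2)⁻¹ := by gcongr; linarith [one_le_pow₀ (n := 2) hr]
    _ = 104 / r ^ 8 := by field_simp

lemma tendsto_inv_sq_atTop_zero : Tendsto (fun r : ℝ => (r ^ 2)⁻¹) atTop (𝓝 0) :=
  tendsto_inv_atTop_zero.comp (tendsto_pow_atTop two_ne_zero)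

lemma tendsto_mathieuPrimitive_expansion :
    Tendsto (fun r => r ^ 6 * (mathieuPrimitive r (r ^ 2 + 1 / 2) - 1 / r ^ 2 + 1 / (6 * r ^ 4)))
      atTop (𝓝 (-1 / 30)) := by
  have hF : ContinuousAt (fun t : ℝ =>
      (-6 + 75 * t + 21 * t ^ 2 + 15 / 4 * t ^ 3 + 15 / 16 * t ^ 4) / (180 * (1 + t / 2) ^ 5)) 0 :=
    ContinuousAt.div (by fun_prop) (by fun_prop) (by norm_num)
  convert (hF.tendsto.comp tendsto_inv_sq_atTop_zero).congr' ?_ using 2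
  · norm_num
  filter_upwards [eventually_ne_atTop 0] with r hr
  simp only [Function.comp, mathieuPrimitive]
  field_simp
  ring

lemma tendsto_S_expansion :
    Tendsto (fun r => r ^ 6 * (S r - 1 / r ^ 2 + 1 / (6 * r ^ 4))) atTop (𝓝 (-1 / 30)) := by
  have herr :
      Tendsto (fun r => r ^ 6 * (S r - mathieuPrimitive r (r ^ 2 + 1 / 2))) atTop (𝓝 0) := by
    refine squeeze_zero_norm' ?_ (by simpa using tendsto_inv_sq_atTop_zero.const_mul 104)
    filter_upwards [eventually_ge_atTop 1] with r hr
    calc ‖r ^ 6 * (S r - mathieuPrimitive r (r ^ 2 + 1 / 2))‖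
        = r ^ 6 * |S r - mathieuPrimitive r (r ^ 2 + 1 / 2)| := by
          rw [Real.norm_eq_abs, abs_mul, abs_of_nonneg (by positivity)]
      _ ≤ r ^ 6 * (104 / r ^ 8) := by gcongr; exact abs_S_sub_mathieuPrimitive_le hr
      _ = 104 * (r ^ 2)⁻¹ := by field_simp
  simpa using (tendsto_mathieuPrimitive_expansion.add herr).congr fun r => by ring

theorem stmt_19 : Filter.Tendsto α Filter.atTop (nhds (13 / 30)) := by
  set F : ℝ × ℝ → ℝ := fun p => (12 * p.1 - 4 / 3 + (2 * p.1 + 1 / 6) * p.2 - p.1 * p.2 ^ 2)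
    / (-4 + (1 - 12 * p.1) * p.2 - 6 * p.1 * p.2 ^ 2)
  have hF : ContinuousAt F (-1 / 30, 0) :=
    ContinuousAt.div (by fun_prop) (by fun_prop) (by norm_num)
  convert (hF.tendsto.comp (tendsto_S_expansion.prodMk_nhds tendsto_inv_sq_atTop_zero)).congr' ?_
    using 2
  · norm_num [F]
  filter_upwards [eventually_ne_atTop 0] with r hr
  simp only [Function.comp, F, α]
  rw [← mul_div_mul_left _ (12 - (12 * r ^ 2 + 6) * S r) (pow_ne_zero 2 hr)]
  congr 1 <;> field_simp <;> ring
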